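/- Let (A,≤) be a directed preordered set, let δ>0, let ω, ψ: A→A be arbitrary functions, and let M_•∈A. Set K := ⌈2δ^{−2}⌉. Then there exist M_1,…,M_K∈A with M_• ≤ M_1 ≤ M_2 ≤ ⋯ ≤ M_K such that the following holds. Let η: (0,∞)→(0,∞) be any function and define real constants C_K := 1 and C_{i−1} := max(C_i, 2/η(C_i)) for i = K,…,2. Let H be a real Hilbert space and let (p_α)_{α∈A} be a family of extended seminorms on H whose dual extended seminorms decrease monotonically, i.e., α ≤ β implies p_β*(u) ≤ p_α*(u) for all u∈H. Then for every f∈H with ‖f‖ ≤ 1 there exist i∈{1,…,K}, indices α,β∈A with ω(α) ≤ M_i and ψ(M_i) ≤ β, and a decomposition f = σ + u + v such that p_β(σ) < C_i, p_α*(u) < η(C_i), and ‖v‖ < δ. -/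

import Mathlib

open Filter
open scoped ENNReal RealInnerProductSpace

/-- The decreasing sequence of constants from the Structure Theorem, read backwards:
`Cseq η 0 = C_K = 1` and `C_{i-1} = max (C_i) (2 / η (C_i))`, i.e. `C_i = Cseq η (K - i)`. -/
noncomputable def Cseq (η : ℝ → ℝ) : ℕ → ℝ
  | 0 => 1
  | m + 1 => max (Cseq η m) (2 / η (Cseq η m))

/-- An extended seminorm on a real Hilbert space. -/
def IsExtSeminorm {H : Type} [NormedAddCommGroup H] [InnerProductSpace ℝ H]
    (p : H → ℝ≥0∞) : Prop :=
  p 0 = 0 ∧ (∀ x y, p (x + y) ≤ p x + p y) ∧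
    ∀ l : ℝ, l ≠ 0 → ∀ x, p (l • x) = ENNReal.ofReal |l| * p x

/-- The dual extended seminorm `p*(f) = sup { |⟪f,φ⟫| : p φ ≤ 1 }`. -/
noncomputable def dualExtSeminorm {H : Type} [NormedAddCommGroup H] [InnerProductSpace ℝ H]
    (p : H → ℝ≥0∞) (f : H) : ℝ≥0∞ :=
  ⨆ (φ : H) (_ : p φ ≤ 1), ENNReal.ofReal |⟪f, φ⟫|

/-!
If `f` has no decomposition at level `i`, Hahn–Banach separates it from the open, convex, balanced
set `{p_β < C_i} + {p_α* < η C_i} + B(0, δ)`: there is `ζ_i` with `⟪ζ_i, f⟫ = 1`,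
`p_β*(ζ_i) ≤ 1 / C_i`, `p_α**(ζ_i) ≤ 1 / η C_i` and `‖ζ_i‖ ≤ 1 / δ`. The indices are chained so
that `β_i ≤ α_j` for `i < j`; monotonicity of the duals and `C_i η C_j ≥ 2` then give
`|⟪ζ_i, ζ_j⟫| ≤ 1/2`. Since `‖f‖ ≤ 1`, expanding `‖∑ ζ_i‖² ≥ K²` forces
`K ≤ δ⁻² + (K - 1) / 2`, i.e. `K < 2 / δ²`, so the decomposition cannot fail at every level.
-/

lemma one_le_Cseq (η : ℝ → ℝ) : ∀ m, 1 ≤ Cseq η m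
  | 0 => le_rfl
  | m + 1 => (one_le_Cseq η m).trans (le_max_left _ _)

lemma Cseq_pos (η : ℝ → ℝ) (m : ℕ) : 0 < Cseq η m :=
  zero_lt_one.trans_le (one_le_Cseq η m)

lemma Cseq_mono (η : ℝ → ℝ) : Monotone (Cseq η) :=
  monotone_nat_of_le_succ fun _ => le_max_left _ _

lemma two_div_le_Cseq (η : ℝ → ℝ) {a b : ℕ} (hab : a < b) : 2 / η (Cseq η a) ≤ Cseq η b :=
  (le_max_right _ _).trans (Cseq_mono η hab)

section Directed

variable {A : Type} [Preorder A] [IsDirected A (· ≤ ·)]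

theorem exists_interleaved_chains (ω ψ : A → A) (M₀ : A) :
    ∃ M γ : ℕ → A, M 0 = M₀ ∧ Monotone M ∧ Monotone γ ∧
      ∀ n, ω (γ n) ≤ M (n + 1) ∧ ψ (M (n + 1)) ≤ γ (n + 1) := by
  choose ub le_ub_left le_ub_right using directed_of (α := A) (· ≤ ·)
  let step : A × A → A × A := fun q => (ub q.1 (ω q.2), ub q.2 (ψ (ub q.1 (ω q.2))))
  let chain : ℕ → A × A := fun n => Nat.rec (motive := fun _ => A × A) (M₀, M₀) (fun _ => step) n
  exact ⟨fun n => (chain n).1, fun n => (chain n).2, rfl,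
    monotone_nat_of_le_succ fun _ => le_ub_left _ _,
    monotone_nat_of_le_succ fun _ => le_ub_left _ _,
    fun _ => ⟨le_ub_right _ _, le_ub_right _ _⟩⟩

end Directed

namespace IsExtSeminorm

variable {H : Type} [NormedAddCommGroup H] [InnerProductSpace ℝ H] {p : H → ℝ≥0∞}

lemma map_smul (hp : IsExtSeminorm p) (l : ℝ) (x : H) :
    p (l • x) = ENNReal.ofReal |l| * p x := by
  rcases eq_or_ne l 0 with rfl | hl
  · simp [hp.1]
  · exact hp.2.2 l hl x

lemma balanced_setOf_lt (hp : IsExtSeminorm p) (c : ℝ≥0∞) : Balanced ℝ {x | p x < c} := by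
  rintro a ha _ ⟨x, hx, rfl⟩
  refine lt_of_le_of_lt ?_ (show p x < c from hx)
  rw [hp.map_smul]
  exact mul_le_of_le_one_left' (ENNReal.ofReal_le_one.mpr ha)

lemma convex_setOf_lt (hp : IsExtSeminorm p) (c : ℝ≥0∞) : Convex ℝ {x | p x < c} := by
  refine convex_iff_forall_pos.mpr fun x hx y hy a b ha hb hab => ?_
  calc p (a • x + b • y) ≤ ENNReal.ofReal a * p x + ENNReal.ofReal b * p y := by
        simpa only [hp.map_smul, abs_of_pos ha, abs_of_pos hb] using hp.2.1 (a • x) (b • y)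
    _ < ENNReal.ofReal a * c + ENNReal.ofReal b * c :=
        ENNReal.add_lt_add
          ((ENNReal.mul_lt_mul_iff_right (by simpa using ha) ENNReal.ofReal_ne_top).mpr hx)
          ((ENNReal.mul_lt_mul_iff_right (by simpa using hb) ENNReal.ofReal_ne_top).mpr hy)
    _ = c := by rw [← add_mul, ← ENNReal.ofReal_add ha.le hb.le, hab, ENNReal.ofReal_one, one_mul]

end IsExtSeminorm

section Dual

variable {H : Type} [NormedAddCommGroup H] [InnerProductSpace ℝ H] {p : H → ℝ≥0∞}

lemma dualExtSeminorm_le_ofReal_iff {r : ℝ} (hr : 0 ≤ r) {f : H} :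
    dualExtSeminorm p f ≤ ENNReal.ofReal r ↔ ∀ φ, p φ ≤ 1 → |⟪f, φ⟫| ≤ r := by
  simp only [dualExtSeminorm, iSup₂_le_iff, ENNReal.ofReal_le_ofReal_iff hr]

lemma isExtSeminorm_dualExtSeminorm (p : H → ℝ≥0∞) : IsExtSeminorm (dualExtSeminorm p) := by
  refine ⟨by simp [dualExtSeminorm], fun x y => iSup₂_le fun φ hφ => ?_, fun l _ x => ?_⟩
  · calc ENNReal.ofReal |⟪x + y, φ⟫| ≤ ENNReal.ofReal (|⟪x, φ⟫| + |⟪y, φ⟫|) :=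
          ENNReal.ofReal_le_ofReal (by rw [inner_add_left]; exact abs_add_le _ _)
      _ ≤ ENNReal.ofReal |⟪x, φ⟫| + ENNReal.ofReal |⟪y, φ⟫| := ENNReal.ofReal_add_le
      _ ≤ _ := add_le_add (le_iSup₂_of_le φ hφ le_rfl) (le_iSup₂_of_le φ hφ le_rfl)
  · simp only [dualExtSeminorm, real_inner_smul_left, abs_mul,
      ENNReal.ofReal_mul (abs_nonneg l), ENNReal.mul_iSup]

lemma abs_inner_le_of_dualExtSeminorm_le (hp : IsExtSeminorm p) {f x : H} {r c : ℝ}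
    (hr : 0 ≤ r) (hc : 0 < c) (hf : dualExtSeminorm p f ≤ ENNReal.ofReal r)
    (hx : p x ≤ ENNReal.ofReal c) : |⟪f, x⟫| ≤ r * c := by
  have hx' : p (c⁻¹ • x) ≤ 1 :=
    calc p (c⁻¹ • x) ≤ ENNReal.ofReal c⁻¹ * ENNReal.ofReal c := by
          rw [hp.map_smul, abs_of_pos (inv_pos.mpr hc)]; gcongr
      _ = 1 := by rw [← ENNReal.ofReal_mul (inv_pos.mpr hc).le, inv_mul_cancel₀ hc.ne',
          ENNReal.ofReal_one]
  have := (dualExtSeminorm_le_ofReal_iff hr).mp hf _ hx'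
  rw [real_inner_smul_right, abs_mul, abs_of_pos (inv_pos.mpr hc)] at this
  rwa [inv_mul_le_iff₀ hc, mul_comm] at this

lemma abs_inner_le_inv_two {ζ ζ' : H} {C e : ℝ} (hC : 0 < C) (he : 0 < e) (h2 : 2 / e ≤ C)
    (hζ : dualExtSeminorm p ζ ≤ ENNReal.ofReal C⁻¹)
    (hζ' : dualExtSeminorm (dualExtSeminorm p) ζ' ≤ ENNReal.ofReal e⁻¹) :
    |⟪ζ', ζ⟫| ≤ 2⁻¹ :=
  calc |⟪ζ', ζ⟫| ≤ e⁻¹ * C⁻¹ :=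
        abs_inner_le_of_dualExtSeminorm_le (isExtSeminorm_dualExtSeminorm p)
          (inv_nonneg.mpr he.le) (inv_pos.mpr hC) hζ' hζ
    _ = (e * C)⁻¹ := (mul_inv e C).symm
    _ ≤ 2⁻¹ := inv_anti₀ two_pos ((div_le_iff₀' he).mp h2)

end Dual

lemma mul_le_one_of_forall_Ioo {C t : ℝ} (hC : 0 < C) (h : ∀ c ∈ Set.Ioo 0 C, c * t ≤ 1) :
    C * t ≤ 1 :=
  le_of_tendsto ((continuous_mul_const t).tendsto C |>.mono_left nhdsWithin_le_nhds)
    (eventually_of_mem (Ioo_mem_nhdsLT hC) h)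

section Separation

variable {H : Type} [NormedAddCommGroup H] [InnerProductSpace ℝ H]

lemma dualExtSeminorm_le_of_forall_lt {p : H → ℝ≥0∞} (hp : IsExtSeminorm p) {C : ℝ} (hC : 0 < C)
    {ζ : H} (h : ∀ x, p x < ENNReal.ofReal C → |⟪ζ, x⟫| < 1) :
    dualExtSeminorm p ζ ≤ ENNReal.ofReal C⁻¹ := by
  refine (dualExtSeminorm_le_ofReal_iff (inv_nonneg.mpr hC.le)).mpr fun φ hφ => ?_
  rw [← mul_one C⁻¹, le_inv_mul_iff₀ hC]
  refine mul_le_one_of_forall_Ioo hC fun c ⟨hc₀, hcC⟩ => ?_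
  have hcφ : p (c • φ) < ENNReal.ofReal C :=
    calc p (c • φ) ≤ ENNReal.ofReal c * 1 := by rw [hp.map_smul, abs_of_pos hc₀]; gcongr
      _ < ENNReal.ofReal C := by rwa [mul_one, ENNReal.ofReal_lt_ofReal_iff hC]
  simpa only [real_inner_smul_right, abs_mul, abs_of_pos hc₀] using (h _ hcφ).le

variable [CompleteSpace H]

open scoped Pointwise

theorem exists_inner_eq_one_of_notMem {W : Set H} (hWo : IsOpen W) (hWc : Convex ℝ W)
    (hWb : Balanced ℝ W) (hW₀ : (0 : H) ∈ W) {f : H} (hf : f ∉ W) :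
    ∃ ζ : H, ⟪ζ, f⟫ = 1 ∧ ∀ x ∈ W, |⟪ζ, x⟫| < 1 := by
  obtain ⟨L, hL⟩ := geometric_hahn_banach_open_point hWc hWo hf
  have hLf : 0 < L f := by simpa using hL 0 hW₀
  refine ⟨(L f)⁻¹ • (InnerProductSpace.toDual ℝ H).symm L, ?_, fun x hx => ?_⟩
  · rw [real_inner_smul_left, InnerProductSpace.toDual_symm_apply, inv_mul_cancel₀ hLf.ne']
  · have hneg : -L x < L f := by simpa using hL (-x) (hWb.neg_mem_iff.mpr hx)
    rw [real_inner_smul_left, InnerProductSpace.toDual_symm_apply, abs_mul,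
      abs_of_pos (inv_pos.mpr hLf), inv_mul_lt_iff₀ hLf, mul_one]
    exact abs_lt.mpr ⟨by linarith, hL x hx⟩

theorem exists_decomposition_or_exists_separating {p q : H → ℝ≥0∞} (hp : IsExtSeminorm p)
    (hq : IsExtSeminorm q) {C e d : ℝ} (hC : 0 < C) (he : 0 < e) (hd : 0 < d) (f : H) :
    (∃ σ u v : H, f = σ + u + v ∧ p σ < ENNReal.ofReal C ∧ q u < ENNReal.ofReal e ∧ ‖v‖ < d) ∨
      ∃ ζ : H, ⟪ζ, f⟫ = 1 ∧ dualExtSeminorm p ζ ≤ ENNReal.ofReal C⁻¹ ∧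
        dualExtSeminorm q ζ ≤ ENNReal.ofReal e⁻¹ ∧ ‖ζ‖ ≤ d⁻¹ := by
  set W := {x | p x < ENNReal.ofReal C} + {x | q x < ENNReal.ofReal e} + Metric.ball (0 : H) d
  by_cases hf : f ∈ W
  · obtain ⟨_, ⟨σ, hσ, u, hu, rfl⟩, v, hv, rfl⟩ := hf
    exact Or.inl ⟨σ, u, v, rfl, hσ, hu, mem_ball_zero_iff.mp hv⟩
  have hW : ∀ {σ u v : H}, p σ < ENNReal.ofReal C → q u < ENNReal.ofReal e → ‖v‖ < d →
      σ + u + v ∈ W := fun hσ hu hv =>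
    Set.add_mem_add (Set.add_mem_add hσ hu) (mem_ball_zero_iff.mpr hv)
  have hp₀ : p 0 < ENNReal.ofReal C := by simpa [hp.1] using hC
  have hq₀ : q 0 < ENNReal.ofReal e := by simpa [hq.1] using he
  have hd₀ : ‖(0 : H)‖ < d := by simpa using hd
  obtain ⟨ζ, hζf, hζW⟩ := exists_inner_eq_one_of_notMem Metric.isOpen_ball.add_left
    (((hp.convex_setOf_lt _).add (hq.convex_setOf_lt _)).add (convex_ball 0 d))
    (((hp.balanced_setOf_lt _).add (hq.balanced_setOf_lt _)).add balanced_ball_zero)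
    (by simpa only [add_zero] using hW hp₀ hq₀ hd₀) hf
  refine Or.inr ⟨ζ, hζf, dualExtSeminorm_le_of_forall_lt hp hC fun x hx => ?_,
    dualExtSeminorm_le_of_forall_lt hq he fun x hx => ?_, ?_⟩
  · simpa using hζW _ (hW hx hq₀ hd₀)
  · simpa using hζW _ (hW hp₀ hx hd₀)
  · rw [← one_div, le_div_iff₀' hd]
    refine mul_le_one_of_forall_Ioo hd fun c ⟨hc₀, hcd⟩ => ?_
    have hζc : ‖innerSL ℝ ζ‖ ≤ 1 / c :=
      ContinuousLinearMap.opNorm_bound_of_ball_bound hc₀ 1 _ fun x hx =>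
        (by simpa using hζW _ (hW hp₀ hq₀ ((mem_closedBall_zero_iff.mp hx).trans_lt hcd)) :
          |⟪ζ, x⟫| < 1).le
    rwa [innerSL_apply_norm, le_div_iff₀' hc₀] at hζc

end Separation

open Finset in
theorem card_le_of_inner_eq_one {H : Type} [NormedAddCommGroup H] [InnerProductSpace ℝ H]
    {ι : Type} {s : Finset ι} (hs : s.Nonempty) {ζ : ι → H} {f : H} (hf : ‖f‖ ≤ 1) {r ε : ℝ}
    (hζf : ∀ i ∈ s, ⟪ζ i, f⟫ = 1) (hζ : ∀ i ∈ s, ‖ζ i‖ ≤ r)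
    (hpair : (s : Set ι).Pairwise fun i j => ⟪ζ i, ζ j⟫ ≤ ε) :
    (#s : ℝ) ≤ r ^ 2 + (#s - 1) * ε := by
  classical
  set S := ∑ i ∈ s, ζ i
  have hrow : ∀ i ∈ s, ⟪ζ i, S⟫ ≤ r ^ 2 + (#s - 1) * ε := by
    intro i hi
    have hdiag : ‖ζ i‖ ^ 2 ≤ r ^ 2 := pow_le_pow_left₀ (norm_nonneg _) (hζ i hi) 2
    have hoff : ∑ j ∈ s.erase i, ⟪ζ i, ζ j⟫ ≤ (#s - 1) * ε := by
      calc ∑ j ∈ s.erase i, ⟪ζ i, ζ j⟫ ≤ ∑ _j ∈ s.erase i, ε := sum_le_sum fun j hj =>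
            hpair hi (mem_of_mem_erase hj) (ne_of_mem_erase hj).symm
        _ = (#s - 1) * ε := by
            rw [sum_const, card_erase_of_mem hi, nsmul_eq_mul, Nat.cast_pred hs.card_pos]
    rw [inner_sum, ← add_sum_erase s _ hi, real_inner_self_eq_norm_sq]
    linarith
  have hS : ‖S‖ ^ 2 ≤ #s * (r ^ 2 + (#s - 1) * ε) := by
    rw [← real_inner_self_eq_norm_sq, sum_inner]
    exact (sum_le_sum hrow).trans_eq (by rw [sum_const, nsmul_eq_mul])
  have hSf : (#s : ℝ) ≤ ‖S‖ :=
    calc (#s : ℝ) = ⟪S, f⟫ := by simp [S, sum_inner, sum_congr rfl hζf]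
      _ ≤ ‖S‖ * ‖f‖ := real_inner_le_norm S f
      _ ≤ ‖S‖ := mul_le_of_le_one_right (norm_nonneg S) hf
  have hcard : (0 : ℝ) < #s := by exact_mod_cast hs.card_pos
  refine le_of_mul_le_mul_left ?_ hcard
  nlinarith

/-- **Structure theorem** (Walsh/Gowers-type decomposition via Hahn–Banach). -/
theorem stmt_9 {A : Type} [Preorder A] [IsDirected A (· ≤ ·)]
    (δ : ℝ) (hδ : 0 < δ) (ω ψ : A → A) (M₀ : A) :
    ∃ M : ℕ → A, M₀ ≤ M 1 ∧ (∀ i, 1 ≤ i → i < Nat.ceil (2 / δ ^ 2) → M i ≤ M (i + 1)) ∧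
      ∀ η : ℝ → ℝ, (∀ x, 0 < x → 0 < η x) →
      ∀ (H : Type) [NormedAddCommGroup H] [InnerProductSpace ℝ H] [CompleteSpace H],
      ∀ p : A → H → ℝ≥0∞, (∀ α, IsExtSeminorm (p α)) →
        (∀ α β : A, α ≤ β → ∀ u, dualExtSeminorm (p β) u ≤ dualExtSeminorm (p α) u) →
      ∀ f : H, ‖f‖ ≤ 1 →
        ∃ i : ℕ, 1 ≤ i ∧ i ≤ Nat.ceil (2 / δ ^ 2) ∧
        ∃ (α β : A) (σ u v : H),
          ω α ≤ M i ∧ ψ (M i) ≤ β ∧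
          f = σ + u + v ∧
          p β σ < ENNReal.ofReal (Cseq η (Nat.ceil (2 / δ ^ 2) - i)) ∧
          dualExtSeminorm (p α) u < ENNReal.ofReal (η (Cseq η (Nat.ceil (2 / δ ^ 2) - i))) ∧
          ‖v‖ < δ := by
  obtain ⟨M, γ, rfl, hM, hγ, hγM⟩ := exists_interleaved_chains ω ψ M₀
  refine ⟨M, hM zero_le_one, fun i _ _ => hM i.le_succ, ?_⟩
  intro η hη H _ _ _ p hp hmono f hf
  set K := ⌈2 / δ ^ 2⌉₊
  set c : ℕ → ℝ := fun n => Cseq η (K - (n + 1))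
  have hc : ∀ n, 0 < c n := fun n => Cseq_pos η _
  by_contra hno
  -- level `n + 1` of the theorem, with `α = γ n`, `β = γ (n + 1)` and `C = c n`
  have hsep : ∀ n < K, ∃ ζ : H, ⟪ζ, f⟫ = 1 ∧
      dualExtSeminorm (p (γ (n + 1))) ζ ≤ ENNReal.ofReal (c n)⁻¹ ∧
      dualExtSeminorm (dualExtSeminorm (p (γ n))) ζ ≤ ENNReal.ofReal (η (c n))⁻¹ ∧
      ‖ζ‖ ≤ δ⁻¹ := fun n hn =>
    (exists_decomposition_or_exists_separating (hp _) (isExtSeminorm_dualExtSeminorm _)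
      (hc n) (hη _ (hc n)) hδ f).resolve_left fun ⟨σ, u, v, hfσuv, hσ, hu, hv⟩ =>
        hno ⟨n + 1, n.succ_pos, hn, γ n, γ (n + 1), σ, u, v, (hγM n).1, (hγM n).2, hfσuv, hσ,
          hu, hv⟩
  choose! ζ hζf hζp hζq hζδ using hsep
  have hpair : (Finset.range K : Set ℕ).Pairwise fun i j => ⟪ζ i, ζ j⟫ ≤ 2⁻¹ := by
    have hcross : ∀ n m, n < m → m < K → |⟪ζ m, ζ n⟫| ≤ 2⁻¹ := fun n m hnm hm =>
      abs_inner_le_inv_two (hc n) (hη _ (hc m)) (two_div_le_Cseq η (by omega))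
        ((hmono _ _ (hγ hnm) _).trans (hζp n (hnm.trans hm))) (hζq m hm)
    intro i hi j hj hij
    simp only [Finset.coe_range, Set.mem_Iio] at hi hj
    rcases hij.lt_or_gt with h | h
    · exact real_inner_comm (ζ i) (ζ j) ▸ (le_abs_self _).trans (hcross i j h hj)
    · exact (le_abs_self _).trans (hcross j i h hi)
  have hK := card_le_of_inner_eq_one (Finset.nonempty_range_iff.mpr (by positivity)) hf
    (fun i hi => hζf i (Finset.mem_range.mp hi)) (fun i hi => hζδ i (Finset.mem_range.mp hi))
    hpair
  have hKceil : 2 / δ ^ 2 ≤ (K : ℝ) := Nat.le_ceil _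
  rw [Finset.card_range, inv_pow] at hK
  rw [div_eq_mul_inv] at hKceil
  linarith
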